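/- Suppose u† ∈ U satisfies F u† = y and R(u†) < ∞, and the source condition holds: there exists ω ∈ V with ξ = F* ω and R(u) ≥ R(u†) + ⟨ξ, u − u†⟩ for all u ∈ U. Fix c > 0 and for each δ > 0 choose α = c·δ. Then there is a constant C > 0 such that for all δ > 0, all y^δ ∈ V with ‖y − y^δ‖ ≤ δ, and every minimizer u_α^δ of T_{α,y^δ}, the residual satisfies ‖F u_α^δ − y^δ‖ ≤ C·δ. -/

import Mathlib

/-! Comparing a minimizer `u` with `u†` gives `½‖Fu − yδ‖² + α R(u) ≤ ½δ² + α R(u†)`, and the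
source condition turns `α (R(u) − R(u†))` into `α ⟪ω, F u − y⟫ ≥ −α ‖ω‖ (δ + ‖Fu − yδ‖)`.
With `α = cδ` this is a quadratic inequality in `r = ‖Fu − yδ‖` whose positive root is
exactly `(1 + 2c‖ω‖) δ`. -/

open Filter Topology ENNReal

/-- The Tikhonov functional `T_{α,y}(u) = (1/2)‖F u − y‖² + α R(u)`. -/
noncomputable def Tik {U V : Type*} [NormedAddCommGroup U] [InnerProductSpace ℝ U]
    [NormedAddCommGroup V] [InnerProductSpace ℝ V]
    (F : U →L[ℝ] V) (R : U → ℝ≥0∞) (α : ℝ) (y : V) (u : U) : ℝ≥0∞ :=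
  ENNReal.ofReal (2⁻¹ * ‖F u - y‖ ^ 2) + ENNReal.ofReal α * R u

theorem le_mul_of_sq_le_sq_add_mul {r δ b : ℝ} (hr : 0 ≤ r) (hδ : 0 ≤ δ)
    (h : r ^ 2 ≤ δ ^ 2 + 2 * b * δ * (δ + r)) : r ≤ (1 + 2 * b) * δ := by
  by_contra! hlt
  have hfactor : r ^ 2 - δ ^ 2 - 2 * b * δ * (δ + r) = (r - (1 + 2 * b) * δ) * (r + δ) := by
    ring
  have hsum : 0 < r + δ := by
    rcases hδ.eq_or_lt with rfl | hδpos
    · simpa using hlt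
    · linarith
  have hpos : 0 < (r - (1 + 2 * b) * δ) * (r + δ) := mul_pos (sub_pos.2 hlt) hsum
  linarith

section Tikhonov

variable {U V : Type*} [NormedAddCommGroup U] [InnerProductSpace ℝ U]
  [NormedAddCommGroup V] [InnerProductSpace ℝ V]
  (F : U →L[ℝ] V) (R : U → ℝ≥0∞) {α : ℝ} {y : V} {u w : U}

theorem Tik_ne_top (hu : R u ≠ ⊤) : Tik F R α y u ≠ ⊤ :=
  ENNReal.add_ne_top.2 ⟨ofReal_ne_top, ENNReal.mul_ne_top ofReal_ne_top hu⟩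

theorem ne_top_of_Tik_ne_top (hα : 0 < α) (h : Tik F R α y u ≠ ⊤) : R u ≠ ⊤ := fun hu =>
  h <| by simp [Tik, hu, ENNReal.mul_top (ofReal_pos.2 hα).ne']

theorem toReal_Tik (hα : 0 ≤ α) (hu : R u ≠ ⊤) :
    (Tik F R α y u).toReal = 2⁻¹ * ‖F u - y‖ ^ 2 + α * (R u).toReal := by
  rw [Tik, ENNReal.toReal_add ofReal_ne_top (ENNReal.mul_ne_top ofReal_ne_top hu),
    ENNReal.toReal_mul, ENNReal.toReal_ofReal (by positivity), ENNReal.toReal_ofReal hα]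

theorem Tik_toReal_le_of_le (hα : 0 < α) (hw : R w ≠ ⊤)
    (h : Tik F R α y u ≤ Tik F R α y w) :
    R u ≠ ⊤ ∧ 2⁻¹ * ‖F u - y‖ ^ 2 + α * (R u).toReal
      ≤ 2⁻¹ * ‖F w - y‖ ^ 2 + α * (R w).toReal := by
  have hu := ne_top_of_Tik_ne_top F R hα (ne_top_of_le_ne_top (Tik_ne_top F R hw) h)
  refine ⟨hu, ?_⟩
  rw [← toReal_Tik F R hα.le hu, ← toReal_Tik F R hα.le hw]
  exact ENNReal.toReal_mono (Tik_ne_top F R hw) h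

theorem residual_sq_le_of_source_condition [CompleteSpace U] [CompleteSpace V]
    (hα : 0 < α) {udag : U} (hfin : R udag ≠ ⊤) (ω : V)
    (hsource : ∀ u : U, ENNReal.ofReal
      ((R udag).toReal + (inner ℝ ((ContinuousLinearMap.adjoint F) ω) (u - udag) : ℝ)) ≤ R u)
    (hmin : Tik F R α y u ≤ Tik F R α y udag) :
    ‖F u - y‖ ^ 2 ≤ ‖F udag - y‖ ^ 2 + 2 * α * ‖ω‖ * (‖F udag - y‖ + ‖F u - y‖) := by
  obtain ⟨hu, hcompare⟩ := Tik_toReal_le_of_le F R hα hfin hmin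
  have hsrc := (ofReal_le_iff_le_toReal hu).1 (hsource u)
  rw [ContinuousLinearMap.adjoint_inner_left, map_sub] at hsrc
  have hcs : -(inner ℝ ω (F u - F udag) : ℝ) ≤ ‖ω‖ * (‖F udag - y‖ + ‖F u - y‖) := by
    rw [← inner_neg_right, neg_sub]
    calc (inner ℝ ω (F udag - F u) : ℝ) ≤ ‖ω‖ * ‖F udag - F u‖ := real_inner_le_norm _ _
      _ ≤ ‖ω‖ * (‖F udag - y‖ + ‖F u - y‖) := by
        gcongr
        exact norm_sub_le_norm_sub_add_norm_sub _ _ _ |>.trans_eq (by rw [norm_sub_rev y])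
  linarith [mul_le_mul_of_nonneg_left hsrc hα.le, mul_le_mul_of_nonneg_left hcs hα.le]

end Tikhonov

theorem tikhonov_convergence_rate_residual_general
    {U V : Type*} [NormedAddCommGroup U] [InnerProductSpace ℝ U] [CompleteSpace U]
    [NormedAddCommGroup V] [InnerProductSpace ℝ V] [CompleteSpace V]
    (F : U →L[ℝ] V) (R : U → ℝ≥0∞)
    (y : V) (udag : U) (hsol : F udag = y) (hfin : R udag ≠ ⊤)
    (ω : V) (ξ : U) (hξ : ξ = (ContinuousLinearMap.adjoint F) ω)
    (hsource : ∀ u : U,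
      ENNReal.ofReal ((R udag).toReal + (inner ℝ ξ (u - udag) : ℝ)) ≤ R u)
    (c : ℝ) (hc : 0 < c) :
    ∃ C : ℝ, 0 < C ∧ ∀ δ : ℝ, 0 < δ → ∀ yδ : V, ‖y - yδ‖ ≤ δ →
      ∀ uαδ : U, (∀ w : U, Tik F R (c * δ) yδ uαδ ≤ Tik F R (c * δ) yδ w) →
        ‖F uαδ - yδ‖ ≤ C * δ := by
  subst hξ hsol
  refine ⟨1 + 2 * (c * ‖ω‖), by positivity, fun δ hδ yδ hy u hmin => ?_⟩
  have hres := residual_sq_le_of_source_condition F R (mul_pos hc hδ) hfin ω hsource (hmin udag)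
  refine le_mul_of_sq_le_sq_add_mul (norm_nonneg _) hδ.le (hres.trans ?_)
  calc _ ≤ δ ^ 2 + 2 * (c * δ) * ‖ω‖ * (δ + ‖F u - yδ‖) := by gcongr
    _ = _ := by ring

/-- Under the source condition `ξ = F* ω ∈ ∂R(u†)` and the parameter
choice `α = c·δ`, the residual `‖F u_α^δ − y^δ‖` of any minimizer `u_α^δ` of
`T_{α,y^δ}` is bounded by `C·δ`. -/
theorem tikhonov_convergence_rate_residual
    {U V : Type*} [NormedAddCommGroup U] [InnerProductSpace ℝ U] [CompleteSpace U]
    [NormedAddCommGroup V] [InnerProductSpace ℝ V] [CompleteSpace V]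
    (F : U →L[ℝ] V) (R : U → ℝ≥0∞)
    (hproper : ∃ u : U, R u ≠ ⊤)
    (hconvex : ∀ u v : U, ∀ t : ℝ, 0 ≤ t → t ≤ 1 →
      R (t • u + (1 - t) • v) ≤ ENNReal.ofReal t * R u + ENNReal.ofReal (1 - t) * R v)
    (y : V) (udag : U) (hsol : F udag = y) (hfin : R udag ≠ ⊤)
    (ω : V) (ξ : U) (hξ : ξ = (ContinuousLinearMap.adjoint F) ω)
    (hsource : ∀ u : U,
      ENNReal.ofReal ((R udag).toReal + (inner ℝ ξ (u - udag) : ℝ)) ≤ R u)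
    (c : ℝ) (hc : 0 < c) :
    ∃ C : ℝ, 0 < C ∧ ∀ δ : ℝ, 0 < δ → ∀ yδ : V, ‖y - yδ‖ ≤ δ →
      ∀ uαδ : U, (∀ w : U, Tik F R (c * δ) yδ uαδ ≤ Tik F R (c * δ) yδ w) →
        ‖F uαδ - yδ‖ ≤ C * δ :=
  tikhonov_convergence_rate_residual_general F R y udag hsol hfin ω ξ hξ hsource c hc
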